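/- arXiv:1109.4130 — 2 statements merged into one kernel-verified Lean document; each statement's English description precedes it below -/
import Mathlib

section
/- Let M be a matroid on the ground set [n] = {1,...,n} with no loops and no coloops, let B be a basis of M, and let v ∈ Trop(M) be such that B is a basis of maximal v-weight. Then for every k ∈ [n] − B, v_k = min{v_j : j ∈ C(k,B) − {k}}. In particular, a vector in the local tropical linear space Trop(M)_B is determined by its coordinates indexed by B. -/
/-- `C` is a circuit of the matroid `M`: a minimal dependent subset of the ground set. -/
def IsCircuitOf {α : Type*} (M : Matroid α) (C : Set α) : Prop :=
  C ⊆ M.E ∧ ¬ M.Indep C ∧ ∀ D, D ⊂ C → M.Indep D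

/-- The fundamental circuit `C(e,B)` of `e` over `B`: the unique circuit of `M`
contained in `B ∪ {e}` (realized as the intersection of all such circuits). -/
def fundCircuitOf {α : Type*} (M : Matroid α) (e : α) (B : Set α) : Set α :=
  ⋂₀ {C | IsCircuitOf M C ∧ C ⊆ insert e B}

/-- The minimum of `v` over `C` is attained at least twice. -/
def MinAttainedTwice {n : ℕ} (v : Fin n → ℝ) (C : Set (Fin n)) : Prop :=
  ∃ j ∈ C, ∃ k ∈ C, j ≠ k ∧ v j = v k ∧ ∀ i ∈ C, v j ≤ v i

/-- `v` lies in the tropical linear space `Trop(M)`: for every circuit `C` of `M`,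
the minimum of `v` over `C` is attained at least twice. -/
def InTrop {n : ℕ} (M : Matroid (Fin n)) (v : Fin n → ℝ) : Prop :=
  ∀ C, IsCircuitOf M C → MinAttainedTwice v C

/-- The `v`-weight of a set `B`, i.e. `∑ i ∈ B, v i`. -/
noncomputable def weightOf {n : ℕ} (v : Fin n → ℝ) (B : Set (Fin n)) : ℝ :=
  ∑ i, B.indicator v i

/-!
If `k ∉ B` and `j ∈ C(k,B) - {k}`, then `B - j + k` is again a basis, so maximality of the
`v`-weight of `B` gives `v k ≤ v j`. On the other hand the minimum of `v` on the circuit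
`C(k,B)` is attained twice, hence at some `j ≠ k`, which forces `v k = v j`. Since
`C(k,B) - {k} ⊆ B`, the coordinates of `v` outside `B` are then determined by those on `B`.
-/

open Set

namespace Matroid

variable {α : Type*} {M : Matroid α} {C I : Set α} {e : α}

lemma isCircuitOf_iff : IsCircuitOf M C ↔ M.IsCircuit C := by
  rw [isCircuit_iff_forall_ssubset, dep_iff, IsCircuitOf]
  tauto

lemma Indep.fundCircuitOf_eq (hI : M.Indep I) (hecl : e ∈ M.closure I) (heI : e ∉ I) :
    fundCircuitOf M e I = M.fundCircuit e I := by
  have hcircuits : {C | IsCircuitOf M C ∧ C ⊆ insert e I} = {M.fundCircuit e I} := by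
    ext C
    simp only [mem_ofPred_eq, mem_singleton_iff, isCircuitOf_iff]
    refine ⟨fun ⟨hC, hCI⟩ ↦ hC.eq_fundCircuit_of_subset hI hCI, ?_⟩
    rintro rfl
    exact ⟨hI.fundCircuit_isCircuit hecl heI, M.fundCircuit_subset_insert e I⟩
  rw [fundCircuitOf, hcircuits, sInter_singleton]

lemma IsBase.fundCircuitOf_eq {B : Set α} (hB : M.IsBase B) (he : e ∈ M.E) (heB : e ∉ B) :
    fundCircuitOf M e B = M.fundCircuit e B :=
  hB.indep.fundCircuitOf_eq (by rwa [hB.closure_eq]) heB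

end Matroid

section Weight

variable {n : ℕ} (v : Fin n → ℝ)

lemma weightOf_union {S T : Set (Fin n)} (h : Disjoint S T) :
    weightOf v (S ∪ T) = weightOf v S + weightOf v T := by
  simp only [weightOf, indicator_union_of_disjoint h, Finset.sum_add_distrib]

lemma weightOf_singleton (k : Fin n) : weightOf v {k} = v k := by
  simp [weightOf, indicator_apply]

lemma weightOf_insert {S : Set (Fin n)} {k : Fin n} (hk : k ∉ S) :
    weightOf v (insert k S) = v k + weightOf v S := by
  rw [insert_eq, weightOf_union v (disjoint_singleton_left.2 hk), weightOf_singleton]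

lemma weightOf_insert_sdiff_singleton {S : Set (Fin n)} {j k : Fin n} (hj : j ∈ S)
    (hk : k ∉ S) : weightOf v (insert k S \ {j}) = weightOf v S + v k - v j := by
  have hkj : k ≠ j := ne_of_mem_of_not_mem hj hk |>.symm
  have hS : weightOf v S = v j + weightOf v (S \ {j}) := by
    rw [← weightOf_insert v (notMem_sdiff_of_mem (mem_singleton j)), insert_sdiff_singleton,
      insert_eq_of_mem hj]
  rw [← insert_sdiff_singleton_comm hkj, weightOf_insert v (fun h ↦ hk h.1), hS]
  ring

end Weight

lemma MinAttainedTwice.exists_ne_isMin {n : ℕ} {v : Fin n → ℝ} {C : Set (Fin n)}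
    (h : MinAttainedTwice v C) (k : Fin n) : ∃ c ∈ C, c ≠ k ∧ ∀ i ∈ C, v c ≤ v i := by
  obtain ⟨a, ha, b, hb, hab, hvab, hmin⟩ := h
  by_cases hak : a = k
  · exact ⟨b, hb, fun hbk ↦ hab (hak.trans hbk.symm), hvab ▸ hmin⟩
  · exact ⟨a, ha, hak, hmin⟩

section LocalTrop

variable {n : ℕ} {M : Matroid (Fin n)} {B : Set (Fin n)} {v : Fin n → ℝ} {k : Fin n}

lemma le_of_mem_fundCircuit_of_weightOf_max (hB : M.IsBase B)
    (hmax : ∀ B', M.IsBase B' → weightOf v B' ≤ weightOf v B) (hkE : k ∈ M.E) (hkB : k ∉ B)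
    {j : Fin n} (hj : j ∈ M.fundCircuit k B \ {k}) : v k ≤ v j := by
  have hjB : j ∈ B := (M.fundCircuit_sdiff_eq_inter hkB ▸ hj).2
  have hindep : M.Indep (insert k B \ {j}) :=
    (hB.indep.mem_fundCircuit_iff (by rwa [hB.closure_eq]) hkB).1 hj.1
  have hle := hmax _ (hB.exchange_isBase_of_indep' hjB hkB hindep)
  rw [weightOf_insert_sdiff_singleton v hjB hkB] at hle
  linarith

theorem eq_sInf_fundCircuitOf (hB : M.IsBase B) (hv : InTrop M v)
    (hmax : ∀ B', M.IsBase B' → weightOf v B' ≤ weightOf v B) (hkE : k ∈ M.E) (hkB : k ∉ B) :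
    v k = sInf (v '' (fundCircuitOf M k B \ {k})) := by
  rw [hB.fundCircuitOf_eq hkE hkB]
  have hC := hB.fundCircuit_isCircuit hkE hkB
  obtain ⟨c, hcC, hck, hcmin⟩ := (hv _ (Matroid.isCircuitOf_iff.2 hC)).exists_ne_isMin k
  have hvc : v c = v k :=
    (hcmin k (M.mem_fundCircuit k B)).antisymm
      (le_of_mem_fundCircuit_of_weightOf_max hB hmax hkE hkB ⟨hcC, hck⟩)
  have hleast : IsLeast (v '' (M.fundCircuit k B \ {k})) (v k) := by
    refine ⟨⟨c, ⟨hcC, hck⟩, hvc⟩, ?_⟩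
    rintro _ ⟨j, hj, rfl⟩
    exact le_of_mem_fundCircuit_of_weightOf_max hB hmax hkE hkB hj
  exact hleast.csInf_eq.symm

end LocalTrop

theorem statement2_general {n : ℕ} (M : Matroid (Fin n)) (hE : M.E = Set.univ)
    (B : Set (Fin n)) (hB : M.IsBase B)
    (v : Fin n → ℝ) (hv : InTrop M v)
    (hmax : ∀ B', M.IsBase B' → weightOf v B' ≤ weightOf v B) :
    (∀ k ∉ B, v k = sInf (v '' (fundCircuitOf M k B \ {k}))) ∧
    (∀ w : Fin n → ℝ, InTrop M w → (∀ B', M.IsBase B' → weightOf w B' ≤ weightOf w B) →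
      (∀ i ∈ B, w i = v i) → w = v) := by
  have hkE : ∀ k, k ∈ M.E := fun k ↦ hE ▸ mem_univ k
  refine ⟨fun k hkB ↦ eq_sInf_fundCircuitOf hB hv hmax (hkE k) hkB, ?_⟩
  intro w hw hwmax hwv
  funext k
  by_cases hkB : k ∈ B
  · exact hwv k hkB
  have hCB : fundCircuitOf M k B \ {k} ⊆ B := by
    rw [hB.fundCircuitOf_eq (hkE k) hkB, M.fundCircuit_sdiff_eq_inter hkB]
    exact inter_subset_right
  rw [eq_sInf_fundCircuitOf hB hw hwmax (hkE k) hkB, eq_sInf_fundCircuitOf hB hv hmax (hkE k) hkB,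
    image_congr fun j hj ↦ hwv j (hCB hj)]

/-- For a matroid `M` on `[n]` with no loops and no coloops, a basis `B`, and
a vector `v ∈ Trop(M)` for which `B` has maximal `v`-weight, every coordinate `v k` with
`k ∉ B` equals `min { v j : j ∈ C(k,B) - {k} }`; in particular a vector of the local
tropical linear space `Trop(M)_B` is determined by its coordinates indexed by `B`. -/
theorem statement2 {n : ℕ} (M : Matroid (Fin n)) (hE : M.E = Set.univ)
    (hloops : ∀ e, M.Indep {e})
    (hcoloops : ∀ e, ∃ B, M.IsBase B ∧ e ∉ B)
    (B : Set (Fin n)) (hB : M.IsBase B)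
    (v : Fin n → ℝ) (hv : InTrop M v)
    (hmax : ∀ B', M.IsBase B' → weightOf v B' ≤ weightOf v B) :
    (∀ k ∉ B, v k = sInf (v '' (fundCircuitOf M k B \ {k}))) ∧
    (∀ w : Fin n → ℝ, InTrop M w → (∀ B', M.IsBase B' → weightOf w B' ≤ weightOf w B) →
      (∀ i ∈ B, w i = v i) → w = v) :=
  statement2_general M hE B hB v hv hmax
end

section
/- Let M be a loopless matroid on the ground set [n] = {1,...,n}, let F ⊆ [n], and let e_F = Σ_{i∈F} e_i ∈ ℝ^n be the 0/1 indicator vector of F. Then e_F lies in the tropical linear space Trop(M) if and only if F is a flat of M. -/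
open Set Matroid

lemma isCircuitOf_iff_isCircuit {α : Type*} {M : Matroid α} {C : Set α} :
    IsCircuitOf M C ↔ M.IsCircuit C := by
  rw [isCircuit_iff_forall_ssubset, Dep]
  exact ⟨fun ⟨hCE, hdep, hmin⟩ ↦ ⟨⟨hdep, hCE⟩, hmin⟩,
    fun ⟨⟨hdep, hCE⟩, hmin⟩ ↦ ⟨hCE, hdep, hmin⟩⟩

lemma sdiff_eq_singleton_iff {α : Type*} {C F : Set α} {e : α} :
    C \ F = {e} ↔ C ⊆ insert e F ∧ e ∈ C ∧ e ∉ F := by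
  simp only [Set.ext_iff, subset_def, mem_sdiff, mem_singleton_iff, mem_insert_iff]
  grind

lemma isFlat_iff_forall_isCircuit_sdiff_ne_singleton {α : Type*} {M : Matroid α} {F : Set α}
    (hF : F ⊆ M.E) : M.IsFlat F ↔ ∀ C, M.IsCircuit C → ∀ e, C \ F ≠ {e} := by
  rw [isFlat_iff_closure_eq, subset_antisymm_iff, and_iff_left (M.subset_closure F hF)]
  simp only [ne_eq, sdiff_eq_singleton_iff]
  refine ⟨fun h C hC e ⟨hCF, heC, heF⟩ ↦
    heF (h ((mem_closure_iff_exists_isCircuit heF).2 ⟨C, hCF, hC, heC⟩)),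
    fun h e hecl ↦ by_contra fun heF ↦ ?_⟩
  obtain ⟨C, hCF, hC, heC⟩ := (mem_closure_iff_exists_isCircuit heF).1 hecl
  exact h C hC e ⟨hCF, heC, heF⟩

lemma minAttainedTwice_indicator_iff {n : ℕ} {F C : Set (Fin n)} (hC : C.Nontrivial) :
    MinAttainedTwice (F.indicator fun _ => (1 : ℝ)) C ↔ ∀ e, C \ F ≠ {e} := by
  constructor
  · rintro ⟨j, hjC, k, hkC, hjk, hjk_eq, hmin⟩ e hCF
    have heC : e ∈ C \ F := hCF ▸ rfl
    have hj_le : F.indicator (fun _ => (1 : ℝ)) j ≤ 0 := by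
      simpa [heC.2] using hmin e heC.1
    have hjF : j ∉ F := fun hjF ↦ by rw [indicator_of_mem hjF] at hj_le; norm_num at hj_le
    have hkF : k ∉ F := fun hkF ↦ by simp [hkF, hjF] at hjk_eq
    have hj : j ∈ C \ F := ⟨hjC, hjF⟩
    have hk : k ∈ C \ F := ⟨hkC, hkF⟩
    rw [hCF] at hj hk
    exact hjk (hj.trans hk.symm)
  · intro hCF
    rcases (C \ F).eq_empty_or_nonempty with hempty | hne
    · obtain ⟨j, hjC, k, hkC, hjk⟩ := hC
      have hCsub : C ⊆ F := sdiff_eq_empty.1 hempty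
      refine ⟨j, hjC, k, hkC, hjk, ?_, fun i hi ↦ ?_⟩
      · simp [hCsub hjC, hCsub hkC]
      · simp [hCsub hjC, hCsub hi]
    · obtain ⟨e, he⟩ | ⟨j, ⟨hjC, hjF⟩, k, ⟨hkC, hkF⟩, hjk⟩ :=
        hne.exists_eq_singleton_or_nontrivial
      · exact absurd he (hCF e)
      refine ⟨j, hjC, k, hkC, hjk, ?_, fun i _ ↦ ?_⟩
      · simp [hjF, hkF]
      · simpa [hjF] using Set.indicator_nonneg (fun _ _ ↦ zero_le_one) i

/-- For a loopless matroid `M` on `[n]` and `F ⊆ [n]`, the 0/1 indicator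
vector `e_F` lies in the tropical linear space `Trop(M)` if and only if `F` is a flat
of `M`. -/
theorem statement8 {n : ℕ} (M : Matroid (Fin n)) (hE : M.E = Set.univ)
    (hloops : ∀ e, M.Indep {e})
    (F : Set (Fin n)) :
    InTrop M (F.indicator fun _ => (1 : ℝ)) ↔ M.IsFlat F := by
  have hloopless : M.Loopless :=
    loopless_iff_forall_isNonloop.2 fun e _ ↦ indep_singleton.1 (hloops e)
  rw [isFlat_iff_forall_isCircuit_sdiff_ne_singleton (hE ▸ subset_univ F), InTrop]
  simp only [isCircuitOf_iff_isCircuit]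
  exact forall₂_congr fun C hC ↦
    minAttainedTwice_indicator_iff (loopless_iff_forall_isCircuit.1 hloopless C hC)
end
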